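/- For each k ≥ 0, N₂^k N₃ = [[4c_k − d_k, √3(3c_k − d_k)],[√3 c_k, d_k]], where c_k = (λ^{k+1} − μ^{k+1})/√13 and d_k = [((7−√13)/2)λ^{k+1} − ((7+√13)/2)μ^{k+1}]/√13 with λ = (3+√13)/2 and μ = (3−√13)/2, and N₂ = [[2,√3],[√3,1]], N₃ = [[2,√3],[√3,2]]. -/

import Mathlib

/-! `(c_k, d_k)` is the orbit of `(1, 2)` under the linear recurrence
`(c, d) ↦ (5c - d, 9c - 2d)`: its eigenvalues are `λ` and `μ`, with eigenvectors `(1, (7 ∓ √13)/2)`.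
Left multiplication by `N₂` acts on the matrices `!![4c - d, √3(3c - d); √3 c, d]` by exactly this
recurrence, and `N₃` is the one with `(c, d) = (1, 2)`, so the formula follows by induction on `k`. -/

noncomputable def lamE : ℝ := (3 + Real.sqrt 13) / 2
noncomputable def muE : ℝ := (3 - Real.sqrt 13) / 2

noncomputable def cseq (k : ℕ) : ℝ := (lamE ^ (k + 1) - muE ^ (k + 1)) / Real.sqrt 13

noncomputable def dseq (k : ℕ) : ℝ :=
  ((7 - Real.sqrt 13) / 2 * lamE ^ (k + 1) - (7 + Real.sqrt 13) / 2 * muE ^ (k + 1)) /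
    Real.sqrt 13

noncomputable def N₂ : Matrix (Fin 2) (Fin 2) ℝ := !![2, Real.sqrt 3; Real.sqrt 3, 1]
noncomputable def N₃ : Matrix (Fin 2) (Fin 2) ℝ := !![2, Real.sqrt 3; Real.sqrt 3, 2]

open Real

lemma sqrt_thirteen_sq : √13 ^ 2 = 13 := sq_sqrt (by norm_num)

lemma cseq_zero : cseq 0 = 1 := by
  simp only [cseq, lamE, muE]
  field_simp
  ring

lemma dseq_zero : dseq 0 = 2 := by
  simp only [dseq, lamE, muE]
  field_simp
  ring

lemma cseq_succ (k : ℕ) : cseq (k + 1) = 5 * cseq k - dseq k := by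
  simp only [cseq, dseq, pow_succ _ (k + 1), lamE, muE]
  ring

lemma lamE_eigen : (7 - √13) / 2 * lamE = 9 - 2 * ((7 - √13) / 2) := by
  unfold lamE
  linear_combination -sqrt_thirteen_sq / 4

lemma muE_eigen : (7 + √13) / 2 * muE = 9 - 2 * ((7 + √13) / 2) := by
  unfold muE
  linear_combination -sqrt_thirteen_sq / 4

lemma dseq_succ (k : ℕ) : dseq (k + 1) = 9 * cseq k - 2 * dseq k := by
  simp only [cseq, dseq, pow_succ _ (k + 1)]
  linear_combination lamE ^ (k + 1) / √13 * lamE_eigen - muE ^ (k + 1) / √13 * muE_eigen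

noncomputable def cdMatrix (c d : ℝ) : Matrix (Fin 2) (Fin 2) ℝ :=
  !![4 * c - d, √3 * (3 * c - d); √3 * c, d]

lemma N₂_mul_cdMatrix (c d : ℝ) :
    N₂ * cdMatrix c d = cdMatrix (5 * c - d) (9 * c - 2 * d) := by
  have h3 : √3 ^ 2 = 3 := sq_sqrt (by norm_num)
  rw [N₂, cdMatrix, cdMatrix, Matrix.mul_fin_two]
  congr 1
  refine Matrix.vec2_eq (Matrix.vec2_eq ?_ ?_) (Matrix.vec2_eq ?_ ?_)
  · linear_combination c * h3
  · ring
  · ring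
  · linear_combination (3 * c - d) * h3

theorem N2_pow_mul_N3 (k : ℕ) :
    N₂ ^ k * N₃ =
      !![4 * cseq k - dseq k, Real.sqrt 3 * (3 * cseq k - dseq k);
         Real.sqrt 3 * cseq k, dseq k] := by
  change N₂ ^ k * N₃ = cdMatrix (cseq k) (dseq k)
  induction k with
  | zero =>
    rw [pow_zero, one_mul, cseq_zero, dseq_zero, N₃, cdMatrix]
    norm_num
  | succ k ih =>
    rw [pow_succ', mul_assoc, ih, N₂_mul_cdMatrix, cseq_succ, dseq_succ]
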